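/- arXiv:2109.12867 — 5 statements merged into one kernel-verified Lean document; each statement's English description precedes it below -/
import Mathlib

section
/- Let p be a prime, e a positive integer, and f ∈ ℤ[x] a polynomial of degree k. Let (b_i)_{i≥0} be a p-ordering of a subset S ⊆ ℤ. Then p^e divides f(b_i) for all 0 ≤ i ≤ k if and only if p^e divides f(b) for all b ∈ S. -/
open Polynomial Finset

/-- `p`-adic valuation on ℤ, valued in `ℕ∞` with `vp p 0 = ⊤`. -/
noncomputable def vp (p : ℕ) (x : ℤ) : ℕ∞ :=
  if x = 0 then ⊤ else (padicValInt p x : ℕ∞)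

/-- `u` is a `p`-ordering of `S ⊆ ℤ`. -/
def IsPOrdering (p : ℕ) (S : Set ℤ) (u : ℕ → ℤ) : Prop :=
  (∀ i, u i ∈ S) ∧
  ∀ m, 0 < m → ∀ a ∈ S,
    vp p (∏ i ∈ Finset.range m, (u m - u i)) ≤ vp p (∏ i ∈ Finset.range m, (a - u i))

/-- `e p m` is the exponent of `p` in the Bhargava factorial `m!_S`. -/
def IsFactExp (S : Set ℤ) (e : ℕ → ℕ → ℕ) : Prop :=
  ∀ p : ℕ, p.Prime → ∀ u : ℕ → ℤ, IsPOrdering p S u →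
    ∀ m, (e p m : ℕ∞) = vp p (∏ i ∈ Finset.range m, (u m - u i))

/-- `x 0, …, x k` is a `d_k`-ordering of `S`, where `e` records the exponents of the
Bhargava factorials of `S`. -/
def IsDkOrdering (S : Set ℤ) (d : ℤ) (k : ℕ) (e : ℕ → ℕ → ℕ) (x : ℕ → ℤ) : Prop :=
  ∀ p : ℕ, p.Prime → (p : ℤ) ∣ d →
    ∃ u : ℕ → ℤ, IsPOrdering p S u ∧ ∀ i ≤ k, (p : ℤ) ^ (e p k + 1) ∣ (x i - u i)

/-- `f ∈ Int(S,ℤ)`, i.e. `f` maps `S` into `ℤ`. -/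
def IsIntValued (S : Set ℤ) (f : Polynomial ℚ) : Prop :=
  ∀ a ∈ S, ∃ n : ℤ, f.eval (a : ℚ) = (n : ℚ)

/-- The ring `Int(S,ℤ)` of integer-valued polynomials on `S`, as a subring of `ℚ[X]`. -/
noncomputable def IntPoly (S : Set ℤ) : Subring (Polynomial ℚ) where
  carrier := {f | ∀ a ∈ S, ∃ n : ℤ, f.eval (a : ℚ) = (n : ℚ)}
  mul_mem' := by
    rintro f g hf hg
    intro a ha
    obtain ⟨n, hn⟩ := hf a ha
    obtain ⟨m, hm⟩ := hg a ha
    exact ⟨n * m, by simp [hn, hm]⟩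
  one_mem' := fun a _ => ⟨1, by simp⟩
  add_mem' := by
    rintro f g hf hg
    intro a ha
    obtain ⟨n, hn⟩ := hf a ha
    obtain ⟨m, hm⟩ := hg a ha
    exact ⟨n + m, by simp [hn, hm]⟩
  zero_mem' := fun a _ => ⟨0, by simp⟩
  neg_mem' := by
    rintro f hf a ha
    obtain ⟨n, hn⟩ := hf a ha
    exact ⟨-n, by simp [hn]⟩

/-- `f` is image primitive over `S`: no prime divides `f(a)` for all `a ∈ S`. -/
def IsImagePrimitive (S : Set ℤ) (f : Polynomial ℚ) : Prop :=
  ∀ p : ℕ, p.Prime → ∃ a ∈ S, ∀ n : ℤ, f.eval (a : ℚ) ≠ (p : ℚ) * (n : ℚ)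

/-- `m` is the fixed divisor `d(S,f)` of `f ∈ ℤ[X]` over `S` (gcd of values, up to sign). -/
def IsFixedDivisor (S : Set ℤ) (f : Polynomial ℤ) (m : ℤ) : Prop :=
  (∀ b ∈ S, m ∣ f.eval b) ∧ ∀ n : ℤ, (∀ b ∈ S, n ∣ f.eval b) → n ∣ m

/-!
A polynomial of degree at most `k + 1` is `r + c ∏_{j ≤ k} (X - b j)` with `deg r ≤ k`, and
`r` agrees with `f` at `b 0, …, b k`; by induction `p ^ e` divides `r` on all of `S`.
Evaluating at `b (k + 1)` shows `p ^ e ∣ c ∏_{j ≤ k} (b (k + 1) - b j)`, and the defining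
minimality of the `p`-ordering transfers this divisibility to `c ∏_{j ≤ k} (x - b j)` for
every `x ∈ S`.
-/

section vp

variable {p : ℕ}

lemma vp_mul (hp : p.Prime) (a b : ℤ) : vp p (a * b) = vp p a + vp p b := by
  have : Fact p.Prime := ⟨hp⟩
  by_cases ha : a = 0
  · simp [vp, ha]
  by_cases hb : b = 0
  · simp [vp, hb]
  simp [vp, ha, hb, padicValInt.mul ha hb]

lemma pow_dvd_iff_le_vp (hp : p.Prime) (n : ℕ) (a : ℤ) : (p : ℤ) ^ n ∣ a ↔ (n : ℕ∞) ≤ vp p a := by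
  have : Fact p.Prime := ⟨hp⟩
  by_cases ha : a = 0
  · simp [vp, ha]
  simp [vp, ha, padicValInt_dvd_iff]

lemma pow_dvd_mul_of_vp_le (hp : p.Prime) {n : ℕ} {c A B : ℤ} (hAB : vp p A ≤ vp p B)
    (hA : (p : ℤ) ^ n ∣ c * A) : (p : ℤ) ^ n ∣ c * B := by
  rw [pow_dvd_iff_le_vp hp, vp_mul hp] at hA ⊢
  exact hA.trans (by gcongr)

end vp

lemma IsPOrdering.vp_prod_le {p : ℕ} {S : Set ℤ} {u : ℕ → ℤ} (hu : IsPOrdering p S u) (m : ℕ)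
    {a : ℤ} (ha : a ∈ S) :
    vp p (∏ i ∈ range m, (u m - u i)) ≤ vp p (∏ i ∈ range m, (a - u i)) := by
  rcases Nat.eq_zero_or_pos m with rfl | hm
  · simp
  · exact hu.2 m hm a ha

lemma exists_eval_eq_add_mul_prod_sub {R : Type*} [CommRing R] [Nontrivial R] (b : ℕ → R)
    {f : R[X]} {k : ℕ} (hf : f.natDegree ≤ k + 1) :
    ∃ r : R[X], ∃ c : R, r.natDegree ≤ k ∧
      ∀ x, f.eval x = r.eval x + c * ∏ j ∈ range (k + 1), (x - b j) := by
  set B : R[X] := ∏ j ∈ range (k + 1), (X - C (b j))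
  have hB : B.Monic := monic_prod_X_sub_C b _
  have hBdeg : B.natDegree = k + 1 := by simp [B]
  have hq : (f /ₘ B).natDegree = 0 := by rw [natDegree_divByMonic f hB, hBdeg]; omega
  refine ⟨f %ₘ B, (f /ₘ B).coeff 0, ?_, fun x => ?_⟩
  · have := natDegree_modByMonic_lt f hB (fun h => by simp [h] at hBdeg)
    omega
  · conv_lhs => rw [← modByMonic_add_div f B, eq_C_of_natDegree_eq_zero hq]
    simp [B, eval_prod, mul_comm]

theorem IsPOrdering.pow_dvd_eval_of_natDegree_le {p : ℕ} (hp : p.Prime) {S : Set ℤ}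
    {b : ℕ → ℤ} (hb : IsPOrdering p S b) {n k : ℕ} {f : ℤ[X]} (hf : f.natDegree ≤ k)
    (h : ∀ i ≤ k, (p : ℤ) ^ n ∣ f.eval (b i)) : ∀ x ∈ S, (p : ℤ) ^ n ∣ f.eval x := by
  induction k generalizing f with
  | zero =>
    intro x _
    rw [eq_C_of_natDegree_le_zero hf] at h ⊢
    simpa using h 0 le_rfl
  | succ k ih =>
    obtain ⟨r, c, hr, hfr⟩ := exists_eval_eq_add_mul_prod_sub b hf
    have hr_S : ∀ x ∈ S, (p : ℤ) ^ n ∣ r.eval x := by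
      refine ih hr fun i hi => ?_
      have hvanish : ∏ j ∈ range (k + 1), (b i - b j) = 0 :=
        prod_eq_zero (mem_range.2 (Nat.lt_succ_of_le hi)) (sub_self _)
      simpa [hfr, hvanish] using h i (Nat.le_succ_of_le hi)
    have hlead : (p : ℤ) ^ n ∣ c * ∏ j ∈ range (k + 1), (b (k + 1) - b j) := by
      have hf_lead := h (k + 1) le_rfl
      rw [hfr] at hf_lead
      exact (dvd_add_right (hr_S _ (hb.1 _))).1 hf_lead
    intro x hx
    rw [hfr]
    exact dvd_add (hr_S x hx) (pow_dvd_mul_of_vp_le hp (hb.vp_prod_le (k + 1) hx) hlead)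

theorem stmt0_general (p : ℕ) (hp : p.Prime) (e : ℕ) (S : Set ℤ)
    (f : Polynomial ℤ) (k : ℕ) (hdeg : f.natDegree = k)
    (b : ℕ → ℤ) (hb : IsPOrdering p S b) :
    (∀ i ≤ k, (p : ℤ) ^ e ∣ f.eval (b i)) ↔ (∀ x ∈ S, (p : ℤ) ^ e ∣ f.eval x) :=
  ⟨hb.pow_dvd_eval_of_natDegree_le hp hdeg.le, fun h i _ => h (b i) (hb.1 i)⟩

/-- For a `p`-ordering `b` of `S` and `f ∈ ℤ[X]` of degree `k`,
`p^e ∣ f(b i)` for all `0 ≤ i ≤ k` iff `p^e ∣ f(b)` for all `b ∈ S`. -/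
theorem stmt0 (p : ℕ) (hp : p.Prime) (e : ℕ) (he : 0 < e) (S : Set ℤ)
    (f : Polynomial ℤ) (k : ℕ) (hdeg : f.natDegree = k)
    (b : ℕ → ℤ) (hb : IsPOrdering p S b) :
    (∀ i ≤ k, (p : ℤ) ^ e ∣ f.eval (b i)) ↔ (∀ x ∈ S, (p : ℤ) ^ e ∣ f.eval x) :=
  stmt0_general p hp e S f k hdeg b hb
end

section
/- Let a_0, ..., a_k be a d_k-ordering of S ⊆ ℤ, F_i(x) = (x-a_0)···(x-a_{i-1}), and f = (Σ_{i=0}^k b_i F_i(x))/d ∈ ℚ[x] with b_i, d ∈ ℤ, d ≠ 0. Then f ∈ Int(S,ℤ) if and only if for every prime p dividing d, v_p(d) ≤ v_p(b_i) + v_p(i!_S) for all 0 ≤ i ≤ k. -/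
open Polynomial Finset

/-!
Fix a prime `p ∣ d` and a `p`-ordering `u` agreeing with `a` modulo `p ^ (e_k + 1)`, where
`e_i = v_p(i!_S)`. The Newton products `F_i^u(x) = ∏_{j<i} (x - u j)` are divisible by `p ^ e_i`
on `S`, vanish at `u l` for `l < i`, and have valuation exactly `e_l` at `u l`. Hence
`p ^ v ∣ ∑ b_i F_i^u` on `S` iff `p ^ v ∣ b_i p ^ e_i` for all `i`: one direction termwise, the
other by solving the triangular system at `u 0, …, u k`. Replacing `u` by `a` changes a term
`b_i F_i` by `b_i` times a multiple of `p ^ (e_k + 1)`, so once `p ^ r ∣ b_i p ^ e_i` is known for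
all `i` the two sums agree modulo `p ^ (r + 1)`; this bootstraps `r` up to `v = v_p(d)`.
-/

lemma le_vp_iff {p : ℕ} (hp : p.Prime) (m : ℕ) (z : ℤ) :
    (m : ℕ∞) ≤ vp p z ↔ (p : ℤ) ^ m ∣ z := by
  have : Fact p.Prime := ⟨hp⟩
  unfold vp
  by_cases hz : z = 0
  · simp [hz]
  · rw [if_neg hz, padicValInt_dvd_iff]
    simp [hz, Nat.cast_le]

lemma dvd_iff_forall_prime_pow_padicValInt_dvd {d z : ℤ} (hd : d ≠ 0) :
    d ∣ z ↔ ∀ p : ℕ, p.Prime → (p : ℤ) ∣ d → (p : ℤ) ^ padicValInt p d ∣ z := by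
  refine ⟨fun h p _ _ => (padicValInt_dvd d).trans h, fun h => ?_⟩
  rw [← Int.natAbs_dvd_natAbs, Nat.dvd_iff_prime_pow_dvd_dvd]
  intro p k hp hpk
  rcases k.eq_zero_or_pos with rfl | hk
  · simp
  have hpk' : (p : ℤ) ^ k ∣ d := Int.dvd_natAbs.mp (by exact_mod_cast hpk)
  have hk_le : k ≤ padicValInt p d :=
    ((padicValInt_dvd_iff_of_ne_one hp.ne_one k d).1 hpk').resolve_left hd
  have hpd : (p : ℤ) ∣ d := (dvd_pow_self _ hk.ne').trans hpk'
  exact Int.natAbs_dvd_natAbs.mpr ((pow_dvd_pow _ hk_le).trans (h p hp hpd))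

lemma pow_succ_dvd_mul_of_pow_dvd_mul_pow {M : Type*} [CommMonoidWithZero M] [IsCancelMulZero M]
    {q b z : M} {r e : ℕ} (hq : q ≠ 0) (hb : q ^ r ∣ b * q ^ e) (hz : q ^ (e + 1) ∣ z) :
    q ^ (r + 1) ∣ b * z := by
  have h : q ^ e * q ^ (r + 1) ∣ q ^ e * (b * z) := by
    have := mul_dvd_mul hb hz
    rwa [show q ^ r * q ^ (e + 1) = q ^ e * q ^ (r + 1) by
        rw [← pow_add, ← pow_add]; congr 1; omega,
      show b * q ^ e * z = q ^ e * (b * z) by rw [mul_right_comm, mul_comm]] at this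
  exact (mul_dvd_mul_iff_left (pow_ne_zero _ hq)).1 h

lemma isIntValued_inv_smul_map_iff {S : Set ℤ} {d : ℤ} (hd : d ≠ 0) (g : ℤ[X]) :
    IsIntValued S ((d : ℚ)⁻¹ • g.map (Int.castRingHom ℚ)) ↔ ∀ x ∈ S, d ∣ g.eval x := by
  refine forall₂_congr fun x _ => ?_
  have hdQ : (d : ℚ) ≠ 0 := Int.cast_ne_zero.mpr hd
  rw [eval_smul, eval_intCast_map, smul_eq_mul, eq_intCast, Int.cast_id]
  constructor
  · rintro ⟨n, hn⟩
    refine ⟨n, ?_⟩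
    field_simp at hn
    exact_mod_cast hn
  · rintro ⟨n, hn⟩
    exact ⟨n, by rw [hn]; push_cast; field_simp⟩

def newtonProd (a : ℕ → ℤ) (i : ℕ) (x : ℤ) : ℤ :=
  ∏ j ∈ range i, (x - a j)

def newtonSum (b a : ℕ → ℤ) (k : ℕ) (x : ℤ) : ℤ :=
  ∑ i ∈ range (k + 1), b i * newtonProd a i x

lemma newtonProd_eq_zero_of_lt (u : ℕ → ℤ) {i l : ℕ} (h : l < i) : newtonProd u i (u l) = 0 :=
  prod_eq_zero (mem_range.2 h) (sub_self _)

lemma newtonProd_modEq {a u : ℕ → ℤ} {n : ℤ} {i : ℕ} (h : ∀ j < i, a j ≡ u j [ZMOD n])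
    (x : ℤ) : newtonProd a i x ≡ newtonProd u i x [ZMOD n] :=
  Int.ModEq.prod fun j hj => (h j (mem_range.1 hj)).sub_left x

lemma newtonSum_sub_newtonSum (b a u : ℕ → ℤ) (k : ℕ) (x : ℤ) :
    newtonSum b a k x - newtonSum b u k x =
      ∑ i ∈ range (k + 1), b i * (newtonProd a i x - newtonProd u i x) := by
  simp only [newtonSum, mul_sub, sum_sub_distrib]

lemma newtonSum_eq_sum_range_succ_of_le (b u : ℕ → ℤ) {k l : ℕ} (hl : l ≤ k) :
    newtonSum b u k (u l) = ∑ i ∈ range (l + 1), b i * newtonProd u i (u l) := by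
  refine (sum_subset (range_subset_range.2 (by omega)) fun i _ hi => ?_).symm
  rw [newtonProd_eq_zero_of_lt u (by simpa using hi), mul_zero]

section POrdering

variable {S : Set ℤ} {p : ℕ} {u : ℕ → ℤ} {E : ℕ → ℕ}

lemma pow_dvd_newtonProd_of_isPOrdering (hp : p.Prime) (hu : IsPOrdering p S u)
    (hE : ∀ m, (E m : ℕ∞) = vp p (newtonProd u m (u m))) {x : ℤ} (hx : x ∈ S) (m : ℕ) :
    (p : ℤ) ^ E m ∣ newtonProd u m x := by
  rcases m.eq_zero_or_pos with rfl | hm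
  · simpa [newtonProd] using (le_vp_iff hp _ _).1 (hE 0).le
  · exact (le_vp_iff hp _ _).1 ((hE m).trans_le (hu.2 m hm x hx))

lemma monotone_of_isPOrdering (hp : p.Prime) (hu : IsPOrdering p S u)
    (hE : ∀ m, (E m : ℕ∞) = vp p (newtonProd u m (u m))) : Monotone E := by
  refine monotone_nat_of_le_succ fun m => ?_
  have h : (p : ℤ) ^ E m ∣ newtonProd u (m + 1) (u (m + 1)) := by
    rw [newtonProd, prod_range_succ]
    exact (pow_dvd_newtonProd_of_isPOrdering hp hu hE (hu.1 (m + 1)) m).mul_right _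
  have := (le_vp_iff hp _ _).2 h
  rw [← hE] at this
  exact_mod_cast this

lemma exists_newtonProd_self_eq_pow_mul (hp : p.Prime)
    (hE : ∀ m, (E m : ℕ∞) = vp p (newtonProd u m (u m))) (m : ℕ) :
    ∃ t : ℤ, newtonProd u m (u m) = (p : ℤ) ^ E m * t ∧ ¬ (p : ℤ) ∣ t := by
  obtain ⟨t, ht⟩ := (le_vp_iff hp _ _).1 (hE m).le
  refine ⟨t, ht, fun hpt => ?_⟩
  have h : ((E m + 1 : ℕ) : ℕ∞) ≤ vp p (newtonProd u m (u m)) := by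
    rw [le_vp_iff hp, ht, pow_succ]
    exact mul_dvd_mul_left _ hpt
  rw [← hE] at h
  exact absurd (by exact_mod_cast h : E m + 1 ≤ E m) (by omega)

lemma pow_dvd_mul_pow_of_pow_dvd_newtonSum (hp : p.Prime) (hu : IsPOrdering p S u)
    (hE : ∀ m, (E m : ℕ∞) = vp p (newtonProd u m (u m))) {b : ℕ → ℤ} {k v : ℕ}
    (h : ∀ l ≤ k, (p : ℤ) ^ v ∣ newtonSum b u k (u l)) :
    ∀ l ≤ k, (p : ℤ) ^ v ∣ b l * (p : ℤ) ^ E l := by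
  intro l
  induction l using Nat.strong_induction_on with
  | _ l ih =>
    intro hl
    have hlower : (p : ℤ) ^ v ∣ ∑ i ∈ range l, b i * newtonProd u i (u l) := by
      refine dvd_sum fun i hi => ?_
      obtain ⟨t, ht⟩ := pow_dvd_newtonProd_of_isPOrdering hp hu hE (hu.1 l) i
      rw [ht, ← mul_assoc]
      exact (ih i (mem_range.1 hi) ((mem_range.1 hi).le.trans hl)).mul_right t
    have hdiag : (p : ℤ) ^ v ∣ b l * newtonProd u l (u l) := by
      have := h l hl
      rwa [newtonSum_eq_sum_range_succ_of_le b u hl, sum_range_succ, dvd_add_right hlower] at this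
    obtain ⟨t, ht, hpt⟩ := exists_newtonProd_self_eq_pow_mul hp hE l
    rw [ht, ← mul_assoc] at hdiag
    exact ((Nat.prime_iff_prime_int.mp hp).coprime_iff_not_dvd.mpr hpt).pow_left
      |>.dvd_of_dvd_mul_right hdiag

variable {a : ℕ → ℤ} {k : ℕ}

lemma pow_dvd_newtonProd_sub (hau : ∀ i ≤ k, (p : ℤ) ^ (E k + 1) ∣ a i - u i) {i : ℕ}
    (hi : i ≤ k) (x : ℤ) : (p : ℤ) ^ (E k + 1) ∣ newtonProd a i x - newtonProd u i x :=
  (newtonProd_modEq (fun j hj => Int.modEq_iff_dvd.2 (hau j (by omega))) x).dvd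

lemma pow_dvd_newtonProd_of_dvd_sub (hp : p.Prime) (hu : IsPOrdering p S u)
    (hE : ∀ m, (E m : ℕ∞) = vp p (newtonProd u m (u m)))
    (hau : ∀ i ≤ k, (p : ℤ) ^ (E k + 1) ∣ a i - u i) {x : ℤ} (hx : x ∈ S) {i : ℕ} (hi : i ≤ k) :
    (p : ℤ) ^ E i ∣ newtonProd a i x := by
  have hdiff : (p : ℤ) ^ E i ∣ newtonProd a i x - newtonProd u i x :=
    (pow_dvd_pow _ ((monotone_of_isPOrdering hp hu hE hi).trans (Nat.le_succ _))).trans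
      (pow_dvd_newtonProd_sub hau hi x)
  simpa using dvd_add hdiff (pow_dvd_newtonProd_of_isPOrdering hp hu hE hx i)

lemma pow_succ_dvd_newtonSum_sub (hp : p.Prime) (hmono : Monotone E)
    (hau : ∀ i ≤ k, (p : ℤ) ^ (E k + 1) ∣ a i - u i) {b : ℕ → ℤ} {r : ℕ}
    (hb : ∀ i ≤ k, (p : ℤ) ^ r ∣ b i * (p : ℤ) ^ E i) (x : ℤ) :
    (p : ℤ) ^ (r + 1) ∣ newtonSum b a k x - newtonSum b u k x := by
  rw [newtonSum_sub_newtonSum]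
  refine dvd_sum fun i hi => ?_
  have hik : i ≤ k := Nat.lt_succ_iff.1 (mem_range.1 hi)
  refine pow_succ_dvd_mul_of_pow_dvd_mul_pow (by exact_mod_cast hp.ne_zero) (hb i hik) ?_
  exact (pow_dvd_pow _ (Nat.succ_le_succ (hmono hik))).trans (pow_dvd_newtonProd_sub hau hik x)

theorem pow_dvd_newtonSum_iff (hp : p.Prime) (hu : IsPOrdering p S u)
    (hE : ∀ m, (E m : ℕ∞) = vp p (newtonProd u m (u m)))
    (hau : ∀ i ≤ k, (p : ℤ) ^ (E k + 1) ∣ a i - u i) {b : ℕ → ℤ} {v : ℕ} :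
    (∀ x ∈ S, (p : ℤ) ^ v ∣ newtonSum b a k x) ↔ ∀ i ≤ k, (p : ℤ) ^ v ∣ b i * (p : ℤ) ^ E i := by
  constructor
  · intro h
    suffices ∀ r ≤ v, ∀ i ≤ k, (p : ℤ) ^ r ∣ b i * (p : ℤ) ^ E i from this v le_rfl
    intro r
    induction r with
    | zero => simp
    | succ r ih =>
      intro hr
      refine pow_dvd_mul_pow_of_pow_dvd_newtonSum hp hu hE fun l _ => ?_
      have hsum : (p : ℤ) ^ (r + 1) ∣ newtonSum b a k (u l) :=
        (pow_dvd_pow _ hr).trans (h _ (hu.1 l))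
      exact (dvd_sub_right hsum).1 <| pow_succ_dvd_newtonSum_sub hp
        (monotone_of_isPOrdering hp hu hE) hau (ih (by omega)) (u l)
  · intro h x hx
    refine dvd_sum fun i hi => ?_
    have hik : i ≤ k := Nat.lt_succ_iff.1 (mem_range.1 hi)
    obtain ⟨t, ht⟩ := pow_dvd_newtonProd_of_dvd_sub hp hu hE hau hx hik
    rw [ht, ← mul_assoc]
    exact (h i hik).mul_right t

end POrdering

/-- `f = (Σ_{i≤k} b_i F_i)/d ∈ Int(S,ℤ)` iff for every prime `p ∣ d`,
`v_p(d) ≤ v_p(b_i · i!_S) = v_p(b_i) + e p i` for all `0 ≤ i ≤ k` (the divisibility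
`p^{v_p(d)} ∣ b_i · p^{e p i}` expresses this, covering `b_i = 0`). -/
theorem stmt5 (S : Set ℤ) (d : ℤ) (hd : d ≠ 0) (k : ℕ)
    (e : ℕ → ℕ → ℕ) (he : IsFactExp S e)
    (a : ℕ → ℤ) (ha : IsDkOrdering S d k e a)
    (b : ℕ → ℤ) (g : Polynomial ℤ)
    (hg : g = ∑ i ∈ Finset.range (k + 1),
      Polynomial.C (b i) * ∏ j ∈ Finset.range i, (Polynomial.X - Polynomial.C (a j)))
    (f : Polynomial ℚ) (hf : f = (d : ℚ)⁻¹ • g.map (Int.castRingHom ℚ)) :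
    IsIntValued S f ↔
      ∀ p : ℕ, p.Prime → (p : ℤ) ∣ d → ∀ i ≤ k,
        (p : ℤ) ^ padicValInt p d ∣ b i * (p : ℤ) ^ e p i := by
  have hg_eval : ∀ x, g.eval x = newtonSum b a k x := fun x => by
    simp [hg, newtonSum, newtonProd, eval_finsetSum, eval_prod]
  rw [hf, isIntValued_inv_smul_map_iff hd]
  simp_rw [hg_eval, dvd_iff_forall_prime_pow_padicValInt_dvd hd]
  constructor
  · intro h p hp hpd
    obtain ⟨u, hu, hau⟩ := ha p hp hpd
    exact (pow_dvd_newtonSum_iff hp hu (he p hp u hu) hau).1 fun x hx => h x hx p hp hpd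
  · intro h x hx p hp hpd
    obtain ⟨u, hu, hau⟩ := ha p hp hpd
    exact (pow_dvd_newtonSum_iff hp hu (he p hp u hu) hau).2 (h p hp hpd) x hx
end

section
/- For S ⊆ ℤ and k ≥ 0, the Bhargava factorial k!_S equals gcd{a ∈ ℤ : a·f ∈ ℤ[x] for all f ∈ Int(S,ℤ) of degree k}. -/
open Polynomial Finset

/-!
Fix a prime `p` and a `p`-ordering `u` of `S`. By minimality of the `p`-ordering,
`p ^ e p k` divides `∏ i < k, (b - u i)` for every `b ∈ S`, so `p ^ (-e p k) • ∏ i < k, (X - u i)`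
is integer-valued on `S` of degree `k`; its leading coefficient shows that every admissible `a`
is divisible by `p ^ e p k`, hence by `k!_S`.

Conversely, write `f ∈ Int(S, ℤ)` of degree `≤ k` in the Newton basis `∏ j < i, (X - u j)` and
solve for the coefficients `c i` one node `u i` at a time: the `i`-th basis polynomial has
`p`-adic norm exactly `p ^ (-e p i)` at `u i` and at most that at every other node, which gives
`|c i|_p ≤ p ^ e p i ≤ p ^ e p k` inductively. So `k!_S • f` has `p`-integral coefficients for every `p`.
-/

open Lagrange

section PadicNorm

variable {p : ℕ} [Fact p.Prime]

lemma vp_le_iff_pow_dvd {n : ℕ} {x : ℤ} : (n : ℕ∞) ≤ vp p x ↔ (p : ℤ) ^ n ∣ x := by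
  rw [padicValInt_dvd_iff]
  rcases eq_or_ne x 0 with rfl | hx
  · simp [vp]
  · simp [vp, hx, Nat.cast_le]

lemma padicNorm_intCast_le_of_pow_dvd {n : ℕ} {x : ℤ} (h : (p : ℤ) ^ n ∣ x) :
    padicNorm p x ≤ (p : ℚ) ^ (-(n : ℤ)) :=
  padicNorm.dvd_iff_norm_le.mp (by exact_mod_cast h)

end PadicNorm

lemma padicNorm_intCast_of_vp_eq {p n : ℕ} {x : ℤ} (h : vp p x = n) :
    padicNorm p x = (p : ℚ) ^ (-(n : ℤ)) := by
  unfold vp at h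
  split_ifs at h with hx
  · exact absurd h.symm (ENat.natCast_ne_top n)
  · have h' : padicValInt p x = n := by exact_mod_cast h
    rw [padicNorm.eq_zpow_of_nonzero (by exact_mod_cast hx), padicValRat.of_int, h']

lemma exists_intCast_eq_of_forall_padicNorm_le_one {q : ℚ}
    (h : ∀ p : ℕ, p.Prime → padicNorm p q ≤ 1) : ∃ n : ℤ, q = n := by
  refine ⟨q.num, ?_⟩
  by_contra hq
  obtain ⟨p, hp, hpd⟩ := Nat.exists_prime_and_dvd (mt (Rat.den_eq_one_iff q).mp (Ne.symm hq))
  have := Fact.mk hp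
  have hnum : padicNorm p q.num = 1 :=
    (padicNorm.int_eq_one_iff _).mpr fun hpn =>
      hp.not_dvd_one (q.reduced ▸ Nat.dvd_gcd (Int.natCast_dvd.mp hpn) hpd)
  have hden : padicNorm p q.den < 1 := (padicNorm.nat_lt_one_iff _).mpr hpd
  have hden0 : 0 < padicNorm p q.den :=
    (padicNorm.nonneg _).lt_of_ne' (padicNorm.nonzero (by exact_mod_cast q.den_nz))
  have := h p hp
  rw [← Rat.num_div_den q, padicNorm.div, hnum, div_le_one hden0] at this
  exact this.not_gt hden

lemma exists_natCast_mul_eq_intCast {N : ℕ} (hN : N ≠ 0) {q : ℚ}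
    (h : ∀ p : ℕ, p.Prime → padicNorm p q ≤ (p : ℚ) ^ padicValNat p N) :
    ∃ n : ℤ, (N : ℚ) * q = n := by
  refine exists_intCast_eq_of_forall_padicNorm_le_one fun p hp => ?_
  have := Fact.mk hp
  have hNnorm : padicNorm p N = (p : ℚ) ^ (-(padicValNat p N : ℤ)) := by
    rw [padicNorm.eq_zpow_of_nonzero (by exact_mod_cast hN), padicValRat.of_nat]
  rw [padicNorm.mul, hNnorm, zpow_neg, zpow_natCast]
  have hp0 : (0 : ℚ) < (p : ℚ) ^ padicValNat p N := by have := hp.pos; positivity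
  rw [inv_mul_le_iff₀ hp0, mul_one]
  exact h p hp

lemma exists_map_eq_natCast_smul {N : ℕ} (hN : N ≠ 0) {f : ℚ[X]}
    (h : ∀ p : ℕ, p.Prime → ∀ j, padicNorm p (f.coeff j) ≤ (p : ℚ) ^ padicValNat p N) :
    ∃ g : ℤ[X], ((N : ℤ) : ℚ) • f = g.map (Int.castRingHom ℚ) := by
  obtain ⟨g, hg⟩ := (lifts_iff_coeff_lifts (f := Int.castRingHom ℚ) (((N : ℤ) : ℚ) • f)).mpr
    fun j => by
      obtain ⟨n, hn⟩ := exists_natCast_mul_eq_intCast hN fun p hp => h p hp j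
      exact ⟨n, by rw [coeff_smul, smul_eq_mul, Int.cast_natCast, hn, eq_intCast]⟩
  exact ⟨g, hg.symm⟩

lemma natCast_dvd_of_forall_pow_padicValNat_dvd {N : ℕ} (hN : N ≠ 0) {a : ℤ}
    (h : ∀ p : ℕ, p.Prime → (p : ℤ) ^ padicValNat p N ∣ a) : (N : ℤ) ∣ a := by
  refine Int.natCast_dvd.mpr ((Nat.dvd_iff_prime_pow_dvd_dvd _ _).mpr fun p j hp hpj => ?_)
  have := Fact.mk hp
  have hj : j ≤ padicValNat p N := (padicValNat_dvd_iff_le hN).mp hpj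
  exact Int.natCast_dvd.mp (by exact_mod_cast (pow_dvd_pow (p : ℤ) hj).trans (h p hp))

noncomputable def pOrdering (p : ℕ) (S : Set ℤ) (hS : S.Nonempty) (m : ℕ) : ℤ :=
  Function.argminOn (fun a => vp p (∏ i : Fin m, (a - pOrdering p S hS i))) S hS
decreasing_by exact i.2

lemma isPOrdering_pOrdering (p : ℕ) {S : Set ℤ} (hS : S.Nonempty) :
    IsPOrdering p S (pOrdering p S hS) := by
  have key : ∀ m, pOrdering p S hS m = Function.argminOn
      (fun a => vp p (∏ i ∈ range m, (a - pOrdering p S hS i))) S hS := fun m => by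
    rw [pOrdering]
    congr
    ext a
    rw [Fin.prod_univ_eq_prod_range (fun i => a - pOrdering p S hS i)]
  refine ⟨fun m => key m ▸ Function.argminOn_mem _ _ _, fun m _ a ha => ?_⟩
  rw [key m]
  exact Function.argminOn_le (fun a => vp p (∏ i ∈ range m, (a - pOrdering p S hS i))) S ha

section FactExp

variable {p : ℕ} [Fact p.Prime] {S : Set ℤ} {e : ℕ → ℕ → ℕ} {u : ℕ → ℤ}

lemma pow_factExp_dvd_prod_sub (he : IsFactExp S e) (hu : IsPOrdering p S u) {a : ℤ}
    (ha : a ∈ S) (m : ℕ) : (p : ℤ) ^ e p m ∣ ∏ i ∈ range m, (a - u i) := by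
  rw [← vp_le_iff_pow_dvd, he p Fact.out u hu m]
  rcases m with _ | m
  · simp
  · exact hu.2 _ m.succ_pos a ha

lemma padicNorm_prod_sub_eq (he : IsFactExp S e) (hu : IsPOrdering p S u) (m : ℕ) :
    padicNorm p (∏ i ∈ range m, (u m - u i) : ℤ) = (p : ℚ) ^ (-(e p m : ℤ)) :=
  padicNorm_intCast_of_vp_eq (he p Fact.out u hu m).symm

lemma monotone_factExp (he : IsFactExp S e) (hu : IsPOrdering p S u) : Monotone (e p) := by
  refine monotone_nat_of_le_succ fun m => ?_
  have hdvd : (p : ℤ) ^ e p m ∣ ∏ i ∈ range (m + 1), (u (m + 1) - u i) := by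
    rw [prod_range_succ]
    exact (pow_factExp_dvd_prod_sub he hu (hu.1 (m + 1)) m).mul_right _
  rw [← vp_le_iff_pow_dvd, ← he p Fact.out u hu] at hdvd
  exact_mod_cast hdvd

end FactExp

lemma coeff_nodal_range_self {R : Type*} [CommRing R] [Nontrivial R] (v : ℕ → R) (n : ℕ) :
    (nodal (range n) v).coeff n = 1 := by
  simpa [natDegree_nodal] using (nodal_monic (s := range n) (v := v)).coeff_natDegree

lemma degree_sub_C_mul_nodal_lt {R : Type*} [CommRing R] [Nontrivial R] {f : R[X]} {n : ℕ}
    (v : ℕ → R) (hf : f.degree < ↑(n + 1)) :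
    (f - C (f.coeff n) * nodal (range n) v).degree < n := by
  rw [degree_lt_iff_coeff_zero] at hf ⊢
  intro m hm
  rw [coeff_sub, coeff_C_mul]
  obtain rfl | hlt := hm.eq_or_lt
  · rw [coeff_nodal_range_self, mul_one, sub_self]
  · rw [hf m hlt, coeff_eq_zero_of_natDegree_lt (p := nodal (range n) v)
      (by simpa [natDegree_nodal] using hlt), mul_zero, sub_zero]

section Newton

variable {p : ℕ} [Fact p.Prime] {v : ℕ → ℚ} {E : ℕ → ℕ}

lemma padicNorm_eval_sum_nodal_le_one
    (hv : ∀ i m, padicNorm p ((nodal (range i) v).eval (v m)) ≤ (p : ℚ) ^ (-(E i : ℤ)))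
    {n : ℕ} {c : ℕ → ℚ} (hc : ∀ i < n, padicNorm p (c i) ≤ (p : ℚ) ^ E i) (m : ℕ) :
    padicNorm p ((∑ i ∈ range n, C (c i) * nodal (range i) v).eval (v m)) ≤ 1 := by
  rw [eval_finsetSum]
  refine padicNorm.sum_le' (fun i hi => ?_) zero_le_one
  rw [eval_mul, eval_C, padicNorm.mul]
  calc padicNorm p (c i) * padicNorm p ((nodal (range i) v).eval (v m))
      ≤ (p : ℚ) ^ E i * (p : ℚ) ^ (-(E i : ℤ)) :=
        mul_le_mul (hc i (mem_range.mp hi)) (hv i m) (padicNorm.nonneg _) (by positivity)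
    _ = 1 := by
        rw [zpow_neg, zpow_natCast, mul_inv_cancel₀ (pow_ne_zero _ (by exact_mod_cast
          (Fact.out : p.Prime).ne_zero))]

lemma exists_nodal_expansion
    (hv : ∀ i m, padicNorm p ((nodal (range i) v).eval (v m)) ≤ (p : ℚ) ^ (-(E i : ℤ)))
    (hv' : ∀ m, (p : ℚ) ^ (-(E m : ℤ)) ≤ padicNorm p ((nodal (range m) v).eval (v m)))
    (n : ℕ) {f : ℚ[X]} (hf : f.degree < n) (hval : ∀ m < n, padicNorm p (f.eval (v m)) ≤ 1) :
    ∃ c : ℕ → ℚ, (∀ i < n, padicNorm p (c i) ≤ (p : ℚ) ^ E i) ∧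
      f = ∑ i ∈ range n, C (c i) * nodal (range i) v := by
  induction n generalizing f with
  | zero => exact ⟨0, by simp, by simpa using hf⟩
  | succ n ih =>
    obtain ⟨g, hg⟩ : ∃ g, g = f - C (f.coeff n) * nodal (range n) v := ⟨_, rfl⟩
    have hg_eval : ∀ m < n, g.eval (v m) = f.eval (v m) := fun m hm => by
      rw [hg, eval_sub, eval_mul, eval_nodal_at_node (mem_range.mpr hm), mul_zero, sub_zero]
    obtain ⟨c, hc, hgc⟩ := ih (hg ▸ degree_sub_C_mul_nodal_lt v hf)
      fun m hm => hg_eval m hm ▸ hval m (Nat.lt_succ_of_lt hm)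
    refine ⟨Function.update c n (f.coeff n), fun i hi => ?_, ?_⟩
    · rcases (Nat.lt_succ_iff.mp hi).lt_or_eq with hi | hi
      · rw [Function.update_of_ne hi.ne]
        exact hc i hi
      rw [hi, Function.update_self]
      have hg_node : padicNorm p (g.eval (v n)) ≤ 1 := by
        rw [hgc]; exact padicNorm_eval_sum_nodal_le_one hv hc n
      have hlead : padicNorm p (f.coeff n * (nodal (range n) v).eval (v n)) ≤ 1 := by
        have : f.coeff n * (nodal (range n) v).eval (v n) = f.eval (v n) - g.eval (v n) := by
          rw [hg, eval_sub, eval_mul, eval_C]; ring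
        rw [this]
        exact padicNorm.sub.trans (max_le (hval n n.lt_succ_self) hg_node)
      have hpE : (0 : ℚ) < (p : ℚ) ^ E n := by
        have := (Fact.out : p.Prime).pos; positivity
      rw [padicNorm.mul] at hlead
      calc padicNorm p (f.coeff n)
          = padicNorm p (f.coeff n) * (p : ℚ) ^ (-(E n : ℤ)) * (p : ℚ) ^ E n := by
            rw [zpow_neg, zpow_natCast, mul_assoc, inv_mul_cancel₀ hpE.ne', mul_one]
        _ ≤ 1 * (p : ℚ) ^ E n := by
            gcongr
            exact (mul_le_mul_of_nonneg_left (hv' n) (padicNorm.nonneg _)).trans hlead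
        _ = (p : ℚ) ^ E n := one_mul _
    · rw [sum_range_succ, Function.update_self, sum_congr rfl fun i hi =>
        by rw [Function.update_of_ne (mem_range.mp hi).ne], ← hgc, hg, sub_add_cancel]

end Newton

lemma eval_nodal_intCast (s : Finset ℕ) (u : ℕ → ℤ) (a : ℤ) :
    (nodal s fun i => (u i : ℚ)).eval (a : ℚ) = ((∏ i ∈ s, (a - u i) : ℤ) : ℚ) := by
  rw [eval_nodal]
  push_cast
  rfl

lemma padicNorm_coeff_nodal_intCast_le_one (p : ℕ) [Fact p.Prime] (s : Finset ℕ) (u : ℕ → ℤ)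
    (j : ℕ) :
    padicNorm p ((nodal s fun i => (u i : ℚ)).coeff j) ≤ 1 := by
  have hmap : (nodal s fun i => (u i : ℚ)) = (nodal s u).map (Int.castRingHom ℚ) := by
    simp [nodal, Polynomial.map_prod]
  rw [hmap, coeff_map]
  exact padicNorm.of_int _

section IntValued

variable {p : ℕ} [Fact p.Prime] {S : Set ℤ} {e : ℕ → ℕ → ℕ} {u : ℕ → ℤ}

lemma padicNorm_coeff_le_of_isIntValued (he : IsFactExp S e) (hu : IsPOrdering p S u) {k : ℕ}
    {f : ℚ[X]} (hf : IsIntValued S f) (hdeg : f.natDegree ≤ k) (j : ℕ) :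
    padicNorm p (f.coeff j) ≤ (p : ℚ) ^ e p k := by
  obtain ⟨c, hc, hfc⟩ := exists_nodal_expansion (v := fun i => (u i : ℚ)) (E := e p)
    (fun i m => by
      rw [eval_nodal_intCast]
      exact padicNorm_intCast_le_of_pow_dvd (pow_factExp_dvd_prod_sub he hu (hu.1 m) i))
    (fun m => by rw [eval_nodal_intCast, padicNorm_prod_sub_eq he hu m])
    (k + 1) (degree_le_natDegree.trans_lt (by exact_mod_cast Nat.lt_succ_of_le hdeg))
    (fun m _ => by
      obtain ⟨z, hz⟩ := hf _ (hu.1 m)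
      rw [hz]
      exact padicNorm.of_int z)
  have hp : (0 : ℚ) < p := by exact_mod_cast (Fact.out : p.Prime).pos
  rw [hfc, finsetSum_coeff]
  refine padicNorm.sum_le' (fun i hi => ?_) (by positivity)
  rw [coeff_C_mul, padicNorm.mul]
  calc padicNorm p (c i) * padicNorm p ((nodal (range i) fun i => (u i : ℚ)).coeff j)
      ≤ (p : ℚ) ^ e p i * 1 :=
        mul_le_mul (hc i (mem_range.mp hi)) (padicNorm_coeff_nodal_intCast_le_one p _ u j)
          (padicNorm.nonneg _) (by positivity)
    _ ≤ (p : ℚ) ^ e p k := by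
        rw [mul_one]
        exact pow_le_pow_right₀ (by exact_mod_cast (Fact.out : p.Prime).one_le)
          (monotone_factExp he hu (Nat.lt_succ_iff.mp (mem_range.mp hi)))

lemma pow_factExp_dvd_of_forall_smul_lifts (he : IsFactExp S e) (hu : IsPOrdering p S u)
    {k : ℕ} {a : ℤ} (ha : ∀ f : ℚ[X], IsIntValued S f → f.natDegree = k →
      ∃ g : ℤ[X], (a : ℚ) • f = g.map (Int.castRingHom ℚ)) :
    (p : ℤ) ^ e p k ∣ a := by
  have hpk : (p : ℚ) ^ e p k ≠ 0 :=
    pow_ne_zero _ (by exact_mod_cast (Fact.out : p.Prime).ne_zero)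
  set f := C ((p : ℚ) ^ e p k)⁻¹ * nodal (range k) fun i => (u i : ℚ)
  have hf : IsIntValued S f := fun b hb => by
    obtain ⟨t, ht⟩ := pow_factExp_dvd_prod_sub he hu hb k
    refine ⟨t, ?_⟩
    rw [eval_mul, eval_C, eval_nodal_intCast, ht]
    push_cast
    field_simp
  have hdeg : f.natDegree = k := by
    rw [natDegree_C_mul (inv_ne_zero hpk), natDegree_nodal, card_range]
  obtain ⟨g, hg⟩ := ha f hf hdeg
  have hcoeff := congrArg (coeff · k) hg
  simp only [f, coeff_smul, coeff_C_mul, coeff_nodal_range_self, coeff_map, smul_eq_mul, mul_one,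
    eq_intCast] at hcoeff
  refine ⟨g.coeff k, ?_⟩
  rw [← div_eq_mul_inv, div_eq_iff hpk] at hcoeff
  exact_mod_cast hcoeff.trans (mul_comm _ _)

end IntValued

/-- the Bhargava factorial `k!_S` (the positive integer `N` whose `p`-adic
valuation is `e p k` for all primes `p`) equals
`gcd {a : a·f ∈ ℤ[X] for all f ∈ Int(S,ℤ) of degree k}`. -/
theorem stmt11 (S : Set ℤ) (hS : S.Nonempty) (k : ℕ)
    (e : ℕ → ℕ → ℕ) (he : IsFactExp S e)
    (N : ℕ) (hN : N ≠ 0) (hfact : ∀ p : ℕ, p.Prime → padicValNat p N = e p k) :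
    (∀ a : ℤ,
        (∀ f : Polynomial ℚ, IsIntValued S f → f.natDegree = k →
          ∃ g : Polynomial ℤ, (a : ℚ) • f = g.map (Int.castRingHom ℚ)) →
        (N : ℤ) ∣ a) ∧
      ∀ m : ℤ,
        (∀ a : ℤ,
          (∀ f : Polynomial ℚ, IsIntValued S f → f.natDegree = k →
            ∃ g : Polynomial ℤ, (a : ℚ) • f = g.map (Int.castRingHom ℚ)) →
          m ∣ a) →
        m ∣ (N : ℤ) := by
  refine ⟨fun a ha => natCast_dvd_of_forall_pow_padicValNat_dvd hN fun p hp => ?_,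
    fun m hm => hm N fun f hf hdeg => ?_⟩
  · have := Fact.mk hp
    rw [hfact p hp]
    exact pow_factExp_dvd_of_forall_smul_lifts he (isPOrdering_pOrdering p hS) ha
  · refine exists_map_eq_natCast_smul hN fun p hp j => ?_
    have := Fact.mk hp
    rw [hfact p hp]
    exact padicNorm_coeff_le_of_isIntValued he (isPOrdering_pOrdering p hS) hf hdeg.le j
end

section
/- The sequence a_i = i² (i = 0, 1, 2, ...) is a simultaneous p-ordering of the set S = {n² : n ∈ ℤ≥0} of squares; that is, for every prime p and every m ≥ 1, the element m² minimizes v_p(∏_{i<m}(x - i²)) over all x ∈ S. -/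
open Polynomial Finset

/-!
Write `P(x) = ∏_{i<m} (x² - i²)`, so the valuation to be minimised at `n²` is that of `P(n)`.
Pairing the factors `x ± i` gives `2 P(x) = (x+m)(x+m-1)⋯(x-m+1) + (x+m-1)(x+m-2)⋯(x-m)`,
a sum of two products of `2m` consecutive integers, so `(2m)! ∣ 2 P(x)` for every integer `x`.
At `x = m` the second product vanishes and the first is `(2m)!`. Hence `P(m) ∣ P(n)` for all `n`,
which bounds every `p`-adic valuation at once.
-/

section DescPochhammer

variable {R : Type*} [CommRing R]

lemma descPochhammer_succ_eval_add_one (k : ℕ) (y : R) :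
    (descPochhammer R (k + 1)).eval (y + 1) = (y + 1) * (descPochhammer R k).eval y := by
  simp [descPochhammer_succ_left]

lemma mul_descPochhammer_eval_eq_prod_sq_sub_sq (x : R) (m : ℕ) :
    x * (descPochhammer R (2 * m + 1)).eval (x + m) =
      ∏ i ∈ range (m + 1), (x ^ 2 - (i : R) ^ 2) := by
  induction m with
  | zero => simp [sq]
  | succ m ih =>
    rw [show 2 * (m + 1) + 1 = 2 * m + 1 + 1 + 1 by ring, Nat.cast_succ, ← add_assoc,
      descPochhammer_succ_eval_add_one, descPochhammer_succ_eval (2 * m + 1), prod_range_succ,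
      ← ih]
    push_cast
    ring

lemma two_mul_prod_sq_sub_sq (x : R) (m : ℕ) :
    2 * ∏ i ∈ range (m + 1), (x ^ 2 - (i : R) ^ 2) =
      (descPochhammer R (2 * m + 2)).eval (x + m + 1) +
        (descPochhammer R (2 * m + 2)).eval (x + m) := by
  rw [show 2 * m + 2 = 2 * m + 1 + 1 from rfl, descPochhammer_succ_eval_add_one,
    descPochhammer_succ_eval (2 * m + 1), ← mul_descPochhammer_eval_eq_prod_sq_sub_sq]
  push_cast
  ring

end DescPochhammer

lemma factorial_dvd_descPochhammer_eval (k : ℕ) (x : ℤ) :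
    (k.factorial : ℤ) ∣ (descPochhammer ℤ k).eval x :=
  ⟨Ring.choose x k, by
    rw [eval_eq_smeval, Ring.descPochhammer_eq_factorial_smul_choose, nsmul_eq_mul]⟩

lemma two_mul_prod_sq_sub_sq_self (m : ℕ) :
    2 * ∏ i ∈ range (m + 1), (((m + 1 : ℕ) : ℤ) ^ 2 - (i : ℤ) ^ 2) =
      ((2 * m + 2).factorial : ℤ) := by
  rw [two_mul_prod_sq_sub_sq,
    show ((m + 1 : ℕ) : ℤ) + m + 1 = ((2 * m + 2 : ℕ) : ℤ) by push_cast; ring,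
    show ((m + 1 : ℕ) : ℤ) + m = ((2 * m + 1 : ℕ) : ℤ) by push_cast; ring,
    descPochhammer_eval_eq_descFactorial, Nat.descFactorial_self,
    descPochhammer_eval_coe_nat_of_lt (Nat.lt_succ_self _), add_zero]

lemma prod_sq_sub_sq_self_ne_zero (m : ℕ) :
    ∏ i ∈ range m, ((m : ℤ) ^ 2 - (i : ℤ) ^ 2) ≠ 0 := by
  cases m with
  | zero => simp
  | succ m =>
    refine right_ne_zero_of_mul (a := (2 : ℤ)) ?_
    rw [two_mul_prod_sq_sub_sq_self]
    exact Int.natCast_ne_zero.mpr (2 * m + 2).factorial_ne_zero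

lemma prod_sq_sub_sq_self_dvd (m : ℕ) (x : ℤ) :
    ∏ i ∈ range m, ((m : ℤ) ^ 2 - (i : ℤ) ^ 2) ∣
      ∏ i ∈ range m, (x ^ 2 - (i : ℤ) ^ 2) := by
  cases m with
  | zero => simp
  | succ m =>
    rw [← mul_dvd_mul_iff_left (two_ne_zero' ℤ), two_mul_prod_sq_sub_sq_self,
      two_mul_prod_sq_sub_sq]
    exact dvd_add (factorial_dvd_descPochhammer_eval _ _) (factorial_dvd_descPochhammer_eval _ _)

lemma vp_le_vp_of_dvd {p : ℕ} (hp : p ≠ 1) {x y : ℤ} (hx : x ≠ 0) (hxy : x ∣ y) :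
    vp p x ≤ vp p y := by
  by_cases hy : y = 0
  · simp [vp, hy]
  · rw [vp, vp, if_neg hx, if_neg hy, Nat.cast_le]
    have hdvd : (p : ℤ) ^ padicValInt p x ∣ y := (padicValInt_dvd x).trans hxy
    exact ((padicValInt_dvd_iff_of_ne_one hp _ y).mp hdvd).resolve_left hy

/-- the sequence `0², 1², 2², …` is a simultaneous `p`-ordering of the
set of squares `S = {n² : n ∈ ℤ≥0}`. -/
theorem stmt13 (S : Set ℤ) (hS : S = {x : ℤ | ∃ n : ℕ, x = (n : ℤ) ^ 2}) :
    ∀ p : ℕ, p.Prime → IsPOrdering p S (fun i => (i : ℤ) ^ 2) := by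
  intro p hp
  subst hS
  refine ⟨fun i => ⟨i, rfl⟩, ?_⟩
  rintro m - _ ⟨n, rfl⟩
  exact vp_le_vp_of_dvd hp.ne_one (prod_sq_sub_sq_self_ne_zero m)
    (prod_sq_sub_sq_self_dvd m n)
end

section
/- Let p be a prime, S ⊆ ℤ, and (u_i), (x_i) two sequences of integers with u_i ∈ S, where (u_i) is a p-ordering of S and x_i ≡ u_i (mod p^{e_k+1}) for 0 ≤ i ≤ k, with p^{e_k} the p-part of k!_S. Then for each 0 ≤ m ≤ k, v_p(∏_{i<m}(x_m − x_i)) = v_p(∏_{i<m}(u_m − u_i)) = v_p(m!_S). -/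
open Polynomial Finset

/-!
For `i < m ≤ k` the factor `u m - u i` divides `∏_{i<m} (u m - u i)`, so its valuation is at most
`e_m ≤ e_k` (the `p`-sequence is nondecreasing: test the minimality of `u m` against `a = u k`).
Since `x m - x i ≡ u m - u i (mod p^(e_k + 1))`, the two differences then have the same
valuation, and the products agree factor by factor.
-/

theorem emultiplicity_eq_of_pow_succ_dvd_sub {α : Type*} [CommRing α] {p a b : α} {n : ℕ}
    (hb : emultiplicity p b ≤ n) (h : p ^ (n + 1) ∣ a - b) :
    emultiplicity p a = emultiplicity p b := by
  have hlt : emultiplicity p b < emultiplicity p (a - b) :=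
    hb.trans_lt <| (ENat.natCast_lt_natCast.2 n.lt_succ_self).trans_le <|
      le_emultiplicity_of_pow_dvd h
  simpa using emultiplicity_add_of_gt hlt

section vp

variable {p : ℕ}

theorem vp_eq_emultiplicity (hp : p.Prime) (x : ℤ) : vp p x = emultiplicity (p : ℤ) x := by
  unfold vp
  split_ifs with hx
  · rw [hx, emultiplicity_zero]
  · rw [padicValInt.of_ne_one_ne_zero hp.ne_one hx,
      (Int.finiteMultiplicity_iff.2 ⟨by simp [hp.ne_one], hx⟩).emultiplicity_eq_multiplicity]

theorem vp_le_vp_of_dvd_s17 (hp : p.Prime) {a b : ℤ} (h : a ∣ b) : vp p a ≤ vp p b := by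
  simpa only [vp_eq_emultiplicity hp] using emultiplicity_le_emultiplicity_of_dvd_right h

theorem vp_prod (hp : p.Prime) {ι : Type*} (s : Finset ι) (f : ι → ℤ) :
    vp p (∏ i ∈ s, f i) = ∑ i ∈ s, vp p (f i) := by
  simpa only [vp_eq_emultiplicity hp] using
    Finset.emultiplicity_prod (Nat.prime_iff_prime_int.mp hp) s f

theorem vp_eq_of_pow_succ_dvd_sub (hp : p.Prime) {a b : ℤ} {n : ℕ} (hb : vp p b ≤ n)
    (h : (p : ℤ) ^ (n + 1) ∣ a - b) : vp p a = vp p b := by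
  simp only [vp_eq_emultiplicity hp] at hb ⊢
  exact emultiplicity_eq_of_pow_succ_dvd_sub hb h

theorem IsPOrdering.vp_prod_sub_le (hp : p.Prime) {S : Set ℤ} {u : ℕ → ℤ} (hu : IsPOrdering p S u)
    {m k : ℕ} (hmk : m ≤ k) :
    vp p (∏ i ∈ range m, (u m - u i)) ≤ vp p (∏ i ∈ range k, (u k - u i)) := by
  rcases m.eq_zero_or_pos with rfl | hm
  · simp [vp]
  calc vp p (∏ i ∈ range m, (u m - u i))
      ≤ vp p (∏ i ∈ range m, (u k - u i)) := hu.2 m hm (u k) (hu.1 k)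
    _ ≤ vp p (∏ i ∈ range k, (u k - u i)) :=
      vp_le_vp_of_dvd_s17 hp (prod_dvd_prod_of_subset _ _ _ (range_subset_range.2 hmk))

end vp

/-- if `u` is a `p`-ordering of `S` and `x i ≡ u i (mod p^{e_k + 1})` for
`i ≤ k`, then `v_p(∏_{i<m}(x m − x i)) = v_p(∏_{i<m}(u m − u i)) = v_p(m!_S)` for `m ≤ k`. -/
theorem stmt17 (p : ℕ) (hp : p.Prime) (S : Set ℤ) (k : ℕ)
    (e : ℕ → ℕ → ℕ) (he : IsFactExp S e)
    (u : ℕ → ℤ) (hu : IsPOrdering p S u)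
    (x : ℕ → ℤ) (hx : ∀ i ≤ k, (p : ℤ) ^ (e p k + 1) ∣ (x i - u i)) :
    ∀ m ≤ k,
      vp p (∏ i ∈ Finset.range m, (x m - x i)) =
        vp p (∏ i ∈ Finset.range m, (u m - u i)) ∧
      vp p (∏ i ∈ Finset.range m, (u m - u i)) = (e p m : ℕ∞) := by
  intro m hm
  refine ⟨?_, (he p hp u hu m).symm⟩
  rw [vp_prod hp, vp_prod hp]
  refine sum_congr rfl fun i hi => vp_eq_of_pow_succ_dvd_sub hp (n := e p k) ?_ ?_
  · calc vp p (u m - u i)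
        ≤ vp p (∏ j ∈ range m, (u m - u j)) := vp_le_vp_of_dvd_s17 hp (dvd_prod_of_mem _ hi)
      _ ≤ vp p (∏ j ∈ range k, (u k - u j)) := hu.vp_prod_sub_le hp hm
      _ = e p k := (he p hp u hu k).symm
  · have hik : i ≤ k := (mem_range.1 hi).le.trans hm
    simpa only [sub_sub_sub_comm] using dvd_sub (hx m hm) (hx i hik)
end
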